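/- arXiv:math/0701692 — 2 statements merged into one kernel-verified Lean document; each statement's English description precedes it below -/
import Mathlib

section
/- Let p be a prime and F = ZMod p. Then every Zorn vector matrix M over F with det M = 1 satisfies: either M or −M lies in the subloop generated by the set {u(α), l(α) : α ∈ F³ and the first nonzero coordinate of α equals 1}. (Equivalently, M/Z(M) over a prime field is generated by the u(α) and l(α) with α ranging over representatives of the projective space PF³.) -/
open Matrix

/-- A Zorn vector matrix over a field `F`: a 2×2 matrix with diagonal scalar
entries `a, b` and off-diagonal vector entries `α, β ∈ F³`. -/
structure Zorn (F : Type*) [Field F] where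
  a : F
  α : Fin 3 → F
  β : Fin 3 → F
  b : F

namespace Zorn

variable {F : Type*} [Field F]

/-- Zorn vector matrix multiplication. -/
def mul (M N : Zorn F) : Zorn F :=
  ⟨M.a * N.a + M.α ⬝ᵥ N.β,
   M.a • N.α + N.b • M.α - crossProduct M.β N.β,
   N.a • M.β + M.b • N.β + crossProduct M.α N.α,
   M.β ⬝ᵥ N.α + M.b * N.b⟩

/-- The determinant of a Zorn vector matrix. -/
def det (M : Zorn F) : F := M.a * M.b - M.α ⬝ᵥ M.β

/-- The identity Zorn vector matrix. -/
def one : Zorn F := ⟨1, 0, 0, 1⟩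

/-- Negation of a Zorn vector matrix. -/
def neg (M : Zorn F) : Zorn F := ⟨-M.a, -M.α, -M.β, -M.b⟩

/-- The inverse map `(a, α, β, b) ↦ (b, −α, −β, a)`. -/
def inv (M : Zorn F) : Zorn F := ⟨M.b, -M.α, -M.β, M.a⟩

/-- The transpose of a Zorn vector matrix. -/
def transpose (M : Zorn F) : Zorn F := ⟨M.a, M.β, M.α, M.b⟩

/-- `u(α) = (1, α, 0, 1)`. -/
def u (α : Fin 3 → F) : Zorn F := ⟨1, α, 0, 1⟩

/-- `l(α) = (1, 0, α, 1)`. -/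
def l (α : Fin 3 → F) : Zorn F := ⟨1, 0, α, 1⟩

open Classical in
/-- `t(α)`: for nonzero `α`, a vector with `α ⬝ᵥ t α = -1` supported at the
first nonzero coordinate of `α`. -/
noncomputable def t (α : Fin 3 → F) : Fin 3 → F :=
  if α 0 ≠ 0 then ![-(α 0)⁻¹, 0, 0]
  else if α 1 ≠ 0 then ![0, -(α 1)⁻¹, 0]
  else ![0, 0, -(α 2)⁻¹]

/-- `s(α) = (0, α, t(α), 0)`. -/
noncomputable def s (α : Fin 3 → F) : Zorn F := ⟨0, α, t α, 0⟩

/-- The subloop generated by a set `S` of Zorn vector matrices: the smallest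
set containing `S` and the identity, closed under multiplication and the
inverse map. -/
inductive InSubloop (S : Set (Zorn F)) : Zorn F → Prop
  | mem : ∀ M ∈ S, InSubloop S M
  | one : InSubloop S one
  | mul : ∀ M N, InSubloop S M → InSubloop S N → InSubloop S (M.mul N)
  | inv : ∀ M, InSubloop S M → InSubloop S M.inv

end Zorn

/-- The first standard basis vector of `F³`. -/
def e1 {F : Type*} [Field F] : Fin 3 → F := ![1, 0, 0]
/-- The second standard basis vector of `F³`. -/
def e2 {F : Type*} [Field F] : Fin 3 → F := ![0, 1, 0]
/-- The third standard basis vector of `F³`. -/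
def e3 {F : Type*} [Field F] : Fin 3 → F := ![0, 0, 1]

/-- `α ∈ F³` has first nonzero coordinate equal to `1`. -/
def FirstNonzeroOne {F : Type*} [Field F] (α : Fin 3 → F) : Prop :=
  α 0 = 1 ∨ (α 0 = 0 ∧ α 1 = 1) ∨ (α 0 = 0 ∧ α 1 = 0 ∧ α 2 = 1)

namespace ZornAux
open Zorn

variable {F : Type*} [Field F]

lemma cross_apply' (a b : Fin 3 → F) : crossProduct a b =
    ![a 1 * b 2 - a 2 * b 1, a 2 * b 0 - a 0 * b 2, a 0 * b 1 - a 1 * b 0] := by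
  simp [crossProduct]

lemma dot_eq (a b : Fin 3 → F) : a ⬝ᵥ b = a 0 * b 0 + a 1 * b 1 + a 2 * b 2 := by
  simp [dotProduct, Fin.sum_univ_three]

lemma det_mul (M N : Zorn F) : (M.mul N).det = M.det * N.det := by
  simp only [Zorn.mul, Zorn.det, cross_apply', dot_eq]
  simp only [Pi.add_apply, Pi.smul_apply, Pi.sub_apply, Matrix.cons_val_zero,
    Matrix.cons_val_one, Matrix.head_cons, smul_eq_mul, Matrix.cons_val_two, Matrix.tail_cons]
  ring

lemma det_u (γ : Fin 3 → F) : (u γ).det = 1 := by simp [Zorn.det, u, dot_eq]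
lemma det_l (γ : Fin 3 → F) : (l γ).det = 1 := by simp [Zorn.det, l, dot_eq]

lemma u_add_smul (α : Fin 3 → F) (c : F) : (u α).mul (u (c • α)) = u ((c + 1) • α) := by
  simp only [Zorn.mul, u, Zorn.mk.injEq]
  refine ⟨by simp [dot_eq], ?_, ?_, by simp [dot_eq]⟩
  · funext i; fin_cases i <;> simp <;> ring
  · funext i; fin_cases i <;> simp [cross_apply']

lemma l_add_smul (α : Fin 3 → F) (c : F) : (l α).mul (l (c • α)) = l ((c + 1) • α) := by
  simp only [Zorn.mul, l, Zorn.mk.injEq]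
  refine ⟨by simp [dot_eq], ?_, ?_, by simp [dot_eq]⟩
  · funext i; fin_cases i <;> simp [cross_apply']
  · funext i; fin_cases i <;> simp <;> ring

variable {S : Set (Zorn F)}

lemma u_nat_smul (α₀ : Fin 3 → F) (h : InSubloop S (u α₀)) (n : ℕ) :
    InSubloop S (u ((n : F) • α₀)) := by
  induction n with
  | zero => simp; exact InSubloop.one
  | succ n ih =>
      have := InSubloop.mul _ _ h ih
      rw [u_add_smul] at this
      convert this using 3
      push_cast; ring

lemma l_nat_smul (α₀ : Fin 3 → F) (h : InSubloop S (l α₀)) (n : ℕ) :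
    InSubloop S (l ((n : F) • α₀)) := by
  induction n with
  | zero => simp; exact InSubloop.one
  | succ n ih =>
      have := InSubloop.mul _ _ h ih
      rw [l_add_smul] at this
      convert this using 3
      push_cast; ring

end ZornAux

namespace ZornAux
open Zorn

variable {F : Type*} [Field F]

section Prime
variable {p : ℕ} [Fact p.Prime]

def S0 (p : ℕ) [Fact p.Prime] : Set (Zorn (ZMod p)) :=
  {N : Zorn (ZMod p) | ∃ α : Fin 3 → ZMod p, FirstNonzeroOne α ∧
      (N = Zorn.u α ∨ N = Zorn.l α)}

lemma u_smul_mem (c : ZMod p) (α₀ : Fin 3 → ZMod p) (h : InSubloop (S0 p) (u α₀)) :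
    InSubloop (S0 p) (u (c • α₀)) := by
  have hc : ((c.val : ℕ) : ZMod p) = c := by simp [ZMod.natCast_val]
  rw [← hc]; exact u_nat_smul α₀ h c.val

lemma l_smul_mem (c : ZMod p) (α₀ : Fin 3 → ZMod p) (h : InSubloop (S0 p) (l α₀)) :
    InSubloop (S0 p) (l (c • α₀)) := by
  have hc : ((c.val : ℕ) : ZMod p) = c := by simp [ZMod.natCast_val]
  rw [← hc]; exact l_nat_smul α₀ h c.val

lemma decomp (α : Fin 3 → ZMod p) : α = 0 ∨
    ∃ (c : ZMod p) (α₀ : Fin 3 → ZMod p), FirstNonzeroOne α₀ ∧ α = c • α₀ := by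
  by_cases h0 : α 0 ≠ 0
  · refine Or.inr ⟨α 0, (α 0)⁻¹ • α, Or.inl (by simp [mul_comm, h0]), ?_⟩
    funext i; simp [← mul_assoc, mul_inv_cancel₀ h0]
  by_cases h1 : α 1 ≠ 0
  · push_neg at h0
    refine Or.inr ⟨α 1, (α 1)⁻¹ • α, Or.inr (Or.inl ⟨by simp [h0], by simp [mul_comm, h1]⟩), ?_⟩
    funext i; simp [← mul_assoc, mul_inv_cancel₀ h1]
  by_cases h2 : α 2 ≠ 0
  · push_neg at h0 h1
    refine Or.inr ⟨α 2, (α 2)⁻¹ • α,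
      Or.inr (Or.inr ⟨by simp [h0], by simp [h1], by simp [mul_comm, h2]⟩), ?_⟩
    funext i; simp [← mul_assoc, mul_inv_cancel₀ h2]
  · push_neg at h0 h1 h2
    refine Or.inl ?_
    funext i; fin_cases i <;> assumption

lemma u_mem (α : Fin 3 → ZMod p) : InSubloop (S0 p) (u α) := by
  rcases decomp α with h | ⟨c, α₀, hα₀, rfl⟩
  · rw [h]; exact InSubloop.one
  · exact u_smul_mem c α₀ (InSubloop.mem _ ⟨α₀, hα₀, Or.inl rfl⟩)

lemma l_mem (α : Fin 3 → ZMod p) : InSubloop (S0 p) (l α) := by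
  rcases decomp α with h | ⟨c, α₀, hα₀, rfl⟩
  · rw [h]; exact InSubloop.one
  · exact l_smul_mem c α₀ (InSubloop.mem _ ⟨α₀, hα₀, Or.inr rfl⟩)

end Prime

lemma smul_e1 (x : F) : x • (e1 : Fin 3 → F) = ![x, 0, 0] := by
  funext i; fin_cases i <;> simp [e1]

lemma w_eq (x : F) (hx : x ≠ 0) :
    ((u (x • (e1 : Fin 3 → F))).mul (l (-(x⁻¹) • (e1 : Fin 3 → F)))).mul
        (u (x • (e1 : Fin 3 → F))) =
      ⟨0, x • (e1 : Fin 3 → F), -(x⁻¹) • (e1 : Fin 3 → F), 0⟩ := by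
  simp only [smul_e1]
  simp only [Zorn.mul, u, l, Zorn.mk.injEq]
  refine ⟨?_, ?_, ?_, ?_⟩
  · simp [dot_eq, cross_apply']; field_simp; simp
  · funext i; fin_cases i <;> simp [dot_eq, cross_apply'] <;> field_simp <;> simp
  · funext i; fin_cases i <;> simp [dot_eq, cross_apply'] <;> field_simp
  · simp [dot_eq, cross_apply']; field_simp; simp

lemma D_eq (a : F) (ha : a ≠ 0) :
    (⟨0, a • (e1 : Fin 3 → F), -(a⁻¹) • (e1 : Fin 3 → F), 0⟩ : Zorn F).mul
      ⟨0, (-1 : F) • (e1 : Fin 3 → F), -((-1 : F)⁻¹) • (e1 : Fin 3 → F), 0⟩ =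
        ⟨a, 0, 0, a⁻¹⟩ := by
  simp only [smul_e1]
  simp only [Zorn.mul, Zorn.mk.injEq]
  refine ⟨?_, ?_, ?_, ?_⟩
  · simp [dot_eq, inv_neg, inv_one]
  · funext i; fin_cases i <;> simp [cross_apply'] <;> field_simp
  · funext i; fin_cases i <;> simp [cross_apply'] <;> field_simp
  · simp [dot_eq, inv_neg, inv_one]

lemma D_mem {p : ℕ} [Fact p.Prime] (a : ZMod p) (ha : a ≠ 0) :
    InSubloop (S0 p) (⟨a, 0, 0, a⁻¹⟩ : Zorn (ZMod p)) := by
  rw [← D_eq a ha, ← w_eq a ha, ← w_eq (-1 : ZMod p) (by simp)]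
  exact InSubloop.mul _ _
    (InSubloop.mul _ _ (InSubloop.mul _ _ (u_mem _) (l_mem _)) (u_mem _))
    (InSubloop.mul _ _ (InSubloop.mul _ _ (u_mem _) (l_mem _)) (u_mem _))

lemma main_decomp (M : Zorn F) (ha : M.a ≠ 0) (hM : M.det = 1) :
    M = (l (M.a⁻¹ • M.β)).mul ((⟨M.a, 0, 0, M.a⁻¹⟩ : Zorn F).mul (u (M.a⁻¹ • M.α))) := by
  obtain ⟨a, α, β, b⟩ := M
  simp only [Zorn.det, dot_eq] at hM
  simp only at ha
  simp only [Zorn.mul, u, l, Zorn.mk.injEq]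
  refine ⟨?_, ?_, ?_, ?_⟩
  · simp [dot_eq]
  · funext i; fin_cases i <;> simp [cross_apply'] <;> field_simp
  · funext i; fin_cases i <;> simp [cross_apply'] <;> field_simp
  · have h2 : β 0 * α 0 + β 1 * α 1 + β 2 * α 2 = a * b - 1 := by linear_combination -hM
    clear hM
    simp only [dot_eq]
    simp [cross_apply', smul_smul, mul_inv_cancel₀ ha]
    field_simp
    first
    | linear_combination h2
    | linear_combination -h2
    | linear_combination a * h2
    | linear_combination (-a) * h2
    | linear_combination a⁻¹ * h2

lemma u_cancel (γ : Fin 3 → F) (M : Zorn F) : (u (-γ)).mul ((u γ).mul M) = M := by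
  obtain ⟨a, α, β, b⟩ := M
  simp only [Zorn.mul, u, Zorn.mk.injEq]
  refine ⟨?_, ?_, ?_, ?_⟩
  · simp [dot_eq, cross_apply', Matrix.vecHead, Matrix.vecTail, Function.comp, Fin.succ_zero_eq_one, Fin.succ_one_eq_two]; try ring
  · funext i; fin_cases i <;> simp [dot_eq, cross_apply', Matrix.vecHead, Matrix.vecTail, Function.comp, Fin.succ_zero_eq_one, Fin.succ_one_eq_two] <;> try ring
  · funext i; fin_cases i <;> simp [dot_eq, cross_apply', Matrix.vecHead, Matrix.vecTail, Function.comp, Fin.succ_zero_eq_one, Fin.succ_one_eq_two] <;> try ring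
  · simp [dot_eq, cross_apply', Matrix.vecHead, Matrix.vecTail, Function.comp, Fin.succ_zero_eq_one, Fin.succ_one_eq_two]; try ring

end ZornAux

namespace ZornAux
open Zorn

variable {p : ℕ} [Fact p.Prime]

lemma main_ne (M : Zorn (ZMod p)) (ha : M.a ≠ 0) (hM : M.det = 1) :
    InSubloop (S0 p) M := by
  rw [main_decomp M ha hM]
  exact InSubloop.mul _ _ (l_mem _)
    (InSubloop.mul _ _ (D_mem M.a ha) (u_mem _))

lemma step (M : Zorn (ZMod p)) (hM : M.det = 1) (γ : Fin 3 → ZMod p)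
    (h : (1 : ZMod p) * M.a + γ ⬝ᵥ M.β ≠ 0) : InSubloop (S0 p) M := by
  rw [← u_cancel γ M]
  refine InSubloop.mul _ _ (u_mem _) (main_ne _ h ?_)
  rw [det_mul, det_u, hM, one_mul]

lemma main (M : Zorn (ZMod p)) (hM : M.det = 1) : InSubloop (S0 p) M := by
  by_cases ha : M.a ≠ 0
  · exact main_ne M ha hM
  push_neg at ha
  have hdot : M.α 0 * M.β 0 + M.α 1 * M.β 1 + M.α 2 * M.β 2 = -1 := by
    have h := hM
    simp only [Zorn.det, dot_eq, ha, zero_mul, mul_zero] at h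
    linear_combination -h
  have hβ : M.β 0 ≠ 0 ∨ M.β 1 ≠ 0 ∨ M.β 2 ≠ 0 := by
    by_contra hc
    push_neg at hc
    obtain ⟨h0, h1, h2⟩ := hc
    rw [h0, h1, h2] at hdot
    simp at hdot
  obtain h | h | h := hβ
  · exact step M hM e1 (by simpa [dot_eq, e1, ha, Matrix.vecHead, Matrix.vecTail] using h)
  · exact step M hM e2 (by simpa [dot_eq, e2, ha, Matrix.vecHead, Matrix.vecTail] using h)
  · exact step M hM e3 (by simpa [dot_eq, e3, ha, Matrix.vecHead, Matrix.vecTail] using h)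

end ZornAux

/-- Over a prime field, the simple Moufang loop is generated by the `u(α)` and
`l(α)` with `α` ranging over representatives of the projective space `PF³`. -/
theorem generated_by_projective_u_l (p : ℕ) [Fact p.Prime] (M : Zorn (ZMod p))
    (hM : M.det = 1) :
    Zorn.InSubloop {N : Zorn (ZMod p) | ∃ α : Fin 3 → ZMod p, FirstNonzeroOne α ∧
      (N = Zorn.u α ∨ N = Zorn.l α)} M ∨
    Zorn.InSubloop {N : Zorn (ZMod p) | ∃ α : Fin 3 → ZMod p, FirstNonzeroOne α ∧
      (N = Zorn.u α ∨ N = Zorn.l α)} M.neg := Or.inl (ZornAux.main M hM)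
end

section
/- Let F be a field and let α, β ∈ F³ be nonzero vectors with t(α) = t(β). Then s(α) * s(β) = (−1, 0, α×β, −1) = −l(−(α×β)) and s(α)' * s(β)' = (−1, −(α×β), 0, −1) = −u(α×β). -/
open Matrix

lemma dot_t_self {F : Type*} [Field F] (α : Fin 3 → F) (hα : α ≠ 0) :
    α ⬝ᵥ Zorn.t α = -1 := by
  unfold Zorn.t
  split_ifs with h0 h1
  · simp [dotProduct, Fin.sum_univ_three, h0]
  · push_neg at h0
    simp [dotProduct, Fin.sum_univ_three, h0, h1]
  · push_neg at h0 h1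
    have h2 : α 2 ≠ 0 := by
      intro h2
      apply hα
      funext i
      fin_cases i <;> simp [h0, h1, h2]
    simp [dotProduct, Fin.sum_univ_three, h0, h1, h2]

lemma t_dot_self {F : Type*} [Field F] (α : Fin 3 → F) (hα : α ≠ 0) :
    Zorn.t α ⬝ᵥ α = -1 := by
  rw [dotProduct_comm]; exact dot_t_self α hα

lemma myCross_self {F : Type*} [Field F] (α : Fin 3 → F) :
    crossProduct α α = 0 := by
  funext i
  fin_cases i <;> simp [crossProduct] <;> ring

/-- If `t(α) = t(β)` then `s(α)·s(β) = (−1, 0, α×β, −1) = −l(−α×β)` and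
`s(α)'·s(β)' = (−1, −(α×β), 0, −1) = −u(α×β)`. -/
theorem s_mul_s_of_same_t (F : Type*) [Field F] (α β : Fin 3 → F)
    (hα : α ≠ 0) (hβ : β ≠ 0) (h : Zorn.t α = Zorn.t β) :
    (Zorn.s α).mul (Zorn.s β) = ⟨-1, 0, crossProduct α β, -1⟩ ∧
    (Zorn.s α).mul (Zorn.s β) = (Zorn.l (-(crossProduct α β))).neg ∧
    (Zorn.s α).transpose.mul (Zorn.s β).transpose = ⟨-1, -(crossProduct α β), 0, -1⟩ ∧
    (Zorn.s α).transpose.mul (Zorn.s β).transpose = (Zorn.u (crossProduct α β)).neg := by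
  have h1 : α ⬝ᵥ Zorn.t β = -1 := by rw [← h]; exact dot_t_self α hα
  have h2 : Zorn.t α ⬝ᵥ β = -1 := by rw [h]; exact t_dot_self β hβ
  have h3 : crossProduct (Zorn.t α) (Zorn.t β) = 0 := by rw [h]; exact myCross_self _
  refine ⟨?_, ?_, ?_, ?_⟩ <;>
    simp [Zorn.mul, Zorn.s, Zorn.transpose, Zorn.l, Zorn.u, Zorn.neg, h1, h2, h3]
end
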